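/- arXiv:0711.3353 — 3 statements merged into one kernel-verified Lean document; each statement's English description precedes it below -/
import Mathlib

section
/- Let I be a nonempty upper ideal in the poset Δ⁺ of positive roots of type A_n and let γ be a minimal element of I. Then the difference between the number of minimal elements of I \ {γ} and the number of minimal elements of I belongs to {−1, 0, 1}; equivalently, r(γ) := #(I \ {γ})_min − #I_min + 1 belongs to {0, 1, 2}. -/
open Finset

/-- The root order on pairs: `(i,j) ≼ (i',j')` iff `i' ≤ i` and `j ≤ j'`. -/
def rle (p q : ℕ × ℕ) : Prop := q.1 ≤ p.1 ∧ p.2 ≤ q.2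

instance : DecidableRel rle := fun p q =>
  inferInstanceAs (Decidable (q.1 ≤ p.1 ∧ p.2 ≤ q.2))

/-- The positive roots of type `A_n`, modelled as pairs `(i,j)` with `1 ≤ i ≤ j ≤ n`. -/
def roots (n : ℕ) : Finset (ℕ × ℕ) :=
  ((Finset.Icc 1 n) ×ˢ (Finset.Icc 1 n)).filter (fun p => p.1 ≤ p.2)

/-- `Γ` is an antichain in `Δ⁺(A_n)`: a set of pairwise incomparable positive roots. -/
def IsAC (n : ℕ) (Γ : Finset (ℕ × ℕ)) : Prop :=
  Γ ⊆ roots n ∧ ∀ p ∈ Γ, ∀ q ∈ Γ, rle p q → p = q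

/-- The upper ideal `I(Γ) = {x ∈ Δ⁺ : ∃ γ ∈ Γ, γ ≼ x}` generated by `Γ`. -/
def upIdeal (n : ℕ) (Γ : Finset (ℕ × ℕ)) : Finset (ℕ × ℕ) :=
  (roots n).filter (fun x => ∃ γ ∈ Γ, rle γ x)

/-- The set of maximal elements of `S` with respect to the root order. -/
def maxOf (S : Finset (ℕ × ℕ)) : Finset (ℕ × ℕ) :=
  S.filter (fun x => ∀ y ∈ S, rle x y → y = x)

/-- The set of minimal elements of `S` with respect to the root order. -/
def minOf (S : Finset (ℕ × ℕ)) : Finset (ℕ × ℕ) :=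
  S.filter (fun x => ∀ y ∈ S, rle y x → y = x)

/-- The reverse operator `𝔛`, sending an antichain `Γ` to the set of maximal
elements of `Δ⁺ \ I(Γ)`. -/
def Xrev (n : ℕ) (Γ : Finset (ℕ × ℕ)) : Finset (ℕ × ℕ) :=
  maxOf (roots n \ upIdeal n Γ)

/-- `r_Γ(γ) = #(I(Γ) \ {γ})_min − #I(Γ)_min + 1`. -/
def rGam (n : ℕ) (Γ : Finset (ℕ × ℕ)) (γ : ℕ × ℕ) : ℤ :=
  ((minOf (upIdeal n Γ \ {γ})).card : ℤ) - ((minOf (upIdeal n Γ)).card : ℤ) + 1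

/-- The OY-number `𝒴(Γ) = Σ_{γ ∈ Γ} r_Γ(γ)`; in particular `𝒴(∅) = 0`. -/
def OY (n : ℕ) (Γ : Finset (ℕ × ℕ)) : ℤ := ∑ γ ∈ Γ, rGam n Γ γ

/-- `I` is an upper ideal of `Δ⁺(A_n)`: a subset closed under going up. -/
def IsUpIdeal (n : ℕ) (I : Finset (ℕ × ℕ)) : Prop :=
  I ⊆ roots n ∧ ∀ p ∈ I, ∀ q ∈ roots n, rle p q → q ∈ I

/-- For a nonempty upper ideal `I` of `Δ⁺(A_n)` and a minimal element `γ` of `I`,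
the difference `#(I \ {γ})_min − #I_min` lies in `{−1,0,1}`; equivalently,
`r(γ) = #(I \ {γ})_min − #I_min + 1` lies in `{0,1,2}`. -/
theorem stmt3 (n : ℕ) (hn : 1 ≤ n) (I : Finset (ℕ × ℕ))
    (hI : IsUpIdeal n I) (hne : I.Nonempty)
    (γ : ℕ × ℕ) (hγ : γ ∈ minOf I) :
    ((minOf (I \ {γ})).card : ℤ) - ((minOf I).card : ℤ) ∈ ({-1, 0, 1} : Set ℤ) ∧
    ((minOf (I \ {γ})).card : ℤ) - ((minOf I).card : ℤ) + 1 ∈ ({0, 1, 2} : Set ℤ) := by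
  obtain ⟨hIsub, hIup⟩ := hI
  have hγmem := hγ
  rw [minOf, mem_filter] at hγ
  obtain ⟨hγI, hγmin⟩ := hγ
  have hγr := hIsub hγI
  rw [roots, mem_filter, mem_product, mem_Icc, mem_Icc] at hγr
  obtain ⟨⟨⟨h1i, hin⟩, ⟨h1j, hjn⟩⟩, hij⟩ := hγr
  have mem_help : ∀ a b : ℕ, 1 ≤ a → a ≤ b → b ≤ n → a ≤ γ.1 → γ.2 ≤ b → (a, b) ∈ I := by
    intro a b ha hab hbn h4 h5
    refine hIup γ hγI (a, b) ?_ ⟨h4, h5⟩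
    rw [roots, mem_filter, mem_product, mem_Icc, mem_Icc]
    exact ⟨⟨⟨ha, le_trans hab hbn⟩, ⟨le_trans ha hab, hbn⟩⟩, hab⟩
  have hsub1 : minOf I \ {γ} ⊆ minOf (I \ {γ}) := by
    intro x hx
    rw [mem_sdiff, mem_singleton] at hx
    rw [minOf, mem_filter] at hx ⊢
    exact ⟨mem_sdiff.2 ⟨hx.1.1, by simp [hx.2]⟩,
      fun y hy hr => hx.1.2 y (mem_sdiff.1 hy).1 hr⟩
  have hsub2 : minOf (I \ {γ}) ⊆ (minOf I \ {γ}) ∪ {(γ.1 - 1, γ.2), (γ.1, γ.2 + 1)} := by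
    intro x hx
    rw [minOf, mem_filter, mem_sdiff, mem_singleton] at hx
    obtain ⟨⟨hxI, hxγ⟩, hxmin⟩ := hx
    by_cases hxA : ∀ y ∈ I, rle y x → y = x
    · exact mem_union_left _
        (by rw [mem_sdiff, mem_singleton, minOf, mem_filter]; exact ⟨⟨hxI, hxA⟩, hxγ⟩)
    · push_neg at hxA
      obtain ⟨y, hyI, hyr, hyx⟩ := hxA
      have hyγ : y = γ := by
        by_contra h
        exact hyx (hxmin y (mem_sdiff.2 ⟨hyI, by simp [h]⟩) hyr)
      rw [hyγ] at hyr hyx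
      obtain ⟨ha, hb⟩ := hyr
      have hxr := hIsub hxI
      rw [roots, mem_filter, mem_product, mem_Icc, mem_Icc] at hxr
      obtain ⟨⟨⟨hx1, hxn⟩, ⟨hx1', hxn'⟩⟩, hxij⟩ := hxr
      have hxne : x.1 ≠ γ.1 ∨ x.2 ≠ γ.2 := by
        by_contra h
        push_neg at h
        exact hxγ (Prod.ext h.1 h.2)
      rcases lt_or_eq_of_le ha with ha' | ha'
      · rcases lt_or_eq_of_le hb with hb' | hb'
        · exfalso
          have hm : (x.1, γ.2) ∈ I :=
            mem_help x.1 γ.2 hx1 (le_trans (le_of_lt ha') hij) hjn (le_of_lt ha') le_rfl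
          have hne' : (x.1, γ.2) ≠ γ := by
            intro h; rw [Prod.ext_iff] at h; simp at h; omega
          have := hxmin (x.1, γ.2) (mem_sdiff.2 ⟨hm, by simp [hne']⟩) ⟨le_rfl, hb⟩
          rw [Prod.ext_iff] at this; simp at this; omega
        · have hkey : x.1 = γ.1 - 1 := by
            by_contra h
            have hm : (γ.1 - 1, γ.2) ∈ I :=
              mem_help (γ.1 - 1) γ.2 (by omega) (by omega) hjn (by omega) le_rfl
            have hne' : (γ.1 - 1, γ.2) ≠ γ := by
              intro h'; rw [Prod.ext_iff] at h'; simp at h'; omega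
            have := hxmin (γ.1 - 1, γ.2) (mem_sdiff.2 ⟨hm, by simp [hne']⟩)
              ⟨by omega, by omega⟩
            rw [Prod.ext_iff] at this; simp at this; omega
          apply mem_union_right
          simp only [mem_insert, mem_singleton]
          exact Or.inl (Prod.ext hkey hb'.symm)
      · rcases lt_or_eq_of_le hb with hb' | hb'
        · have hkey : x.2 = γ.2 + 1 := by
            by_contra h
            have hm : (γ.1, γ.2 + 1) ∈ I :=
              mem_help γ.1 (γ.2 + 1) h1i (by omega) (by omega) le_rfl (by omega)
            have hne' : (γ.1, γ.2 + 1) ≠ γ := by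
              intro h'; rw [Prod.ext_iff] at h'; simp only at h'; omega
            have := hxmin (γ.1, γ.2 + 1) (mem_sdiff.2 ⟨hm, by simp [hne']⟩)
              ⟨by omega, by omega⟩
            rw [Prod.ext_iff] at this; simp at this; omega
          apply mem_union_right
          simp only [mem_insert, mem_singleton]
          exact Or.inr (Prod.ext ha' hkey)
        · exact absurd (Prod.ext ha' hb'.symm) hxγ
  have hγsing : {γ} ⊆ minOf I := by simpa using hγmem
  have hcard1 : (minOf I \ {γ}).card = (minOf I).card - 1 := by
    rw [card_sdiff_of_subset hγsing, card_singleton]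
  have hpos : 1 ≤ (minOf I).card := card_pos.2 ⟨γ, hγmem⟩
  have hlow : (minOf I).card - 1 ≤ (minOf (I \ {γ})).card := by
    calc (minOf I).card - 1 = (minOf I \ {γ}).card := hcard1.symm
      _ ≤ _ := card_le_card hsub1
  have hhigh : (minOf (I \ {γ})).card ≤ (minOf I).card - 1 + 2 := by
    calc (minOf (I \ {γ})).card
        ≤ ((minOf I \ {γ}) ∪ {(γ.1 - 1, γ.2), (γ.1, γ.2 + 1)}).card := card_le_card hsub2
      _ ≤ (minOf I \ {γ}).card + ({(γ.1 - 1, γ.2), (γ.1, γ.2 + 1)} : Finset (ℕ × ℕ)).card :=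
          card_union_le _ _
      _ ≤ (minOf I).card - 1 + 2 := by
          rw [hcard1]
          have : ({(γ.1 - 1, γ.2), (γ.1, γ.2 + 1)} : Finset (ℕ × ℕ)).card ≤ 2 :=
            card_insert_le _ _ |>.trans (by simp)
          omega
  constructor <;> simp only [Set.mem_insert_iff, Set.mem_singleton_iff] <;> omega
end

section
/- Let Γ = {(i₁,j₁),…,(i_k,j_k)} be a nonempty antichain in the poset Δ⁺ of positive roots of type A_n, with i₁ < ⋯ < i_k and j₁ < ⋯ < j_k. Set i₀ = 0 and j_{k+1} = n + 1. Then for each s, r_Γ((i_s,j_s)) = χ(i_s − i_{s−1}) + χ(j_{s+1} − j_s), and consequently 𝒴(Γ) = Σ_{s=1}^k χ(i_s − i_{s−1}) + Σ_{s=1}^k χ(j_{s+1} − j_s). -/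
open Finset

/-- `χ(a) = 1` if `a ≥ 2` and `χ(a) = 0` otherwise (in particular `χ(1) = 0`). -/
def chi (a : ℕ) : ℤ := if 2 ≤ a then 1 else 0

/-- For a nonempty antichain `Γ = {(i₁,j₁),…,(i_k,j_k)}` of `Δ⁺(A_n)` with
`i₁ < ⋯ < i_k`, `j₁ < ⋯ < j_k`, setting `i₀ = 0` and `j_{k+1} = n+1`, one has
`r_Γ((i_s,j_s)) = χ(i_s − i_{s−1}) + χ(j_{s+1} − j_s)` for every `s`, and hence
`𝒴(Γ) = Σ_s χ(i_s − i_{s−1}) + Σ_s χ(j_{s+1} − j_s)`. -/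
theorem stmt4 (n k : ℕ) (hn : 1 ≤ n) (hk : 1 ≤ k) (i j : ℕ → ℕ)
    (hi0 : i 0 = 0) (hjtop : j (k + 1) = n + 1)
    (hiSM : StrictMonoOn i (Set.Icc 0 k))
    (hjSM : StrictMonoOn j (Set.Icc 1 (k + 1)))
    (hij : ∀ s, 1 ≤ s → s ≤ k → i s ≤ j s)
    (hjn : ∀ s, 1 ≤ s → s ≤ k → j s ≤ n) :
    (∀ s, 1 ≤ s → s ≤ k →
      rGam n ((Finset.Icc 1 k).image (fun t => (i t, j t))) (i s, j s)
        = chi (i s - i (s - 1)) + chi (j (s + 1) - j s)) ∧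
    OY n ((Finset.Icc 1 k).image (fun t => (i t, j t)))
      = (∑ s ∈ Finset.Icc 1 k, chi (i s - i (s - 1)))
        + (∑ s ∈ Finset.Icc 1 k, chi (j (s + 1) - j s)) := by
  have hrle : ∀ p q : ℕ × ℕ, rle p q ↔ q.1 ≤ p.1 ∧ p.2 ≤ q.2 := fun _ _ => Iff.rfl
  set Γ := (Finset.Icc 1 k).image (fun t => (i t, j t)) with hGdef
  -- monotonicity helpers
  have hiLT : ∀ a b, a < b → b ≤ k → i a < i b := fun a b hab hbk =>
    hiSM ⟨Nat.zero_le _, le_trans hab.le hbk⟩ ⟨Nat.zero_le _, hbk⟩ hab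
  have hjLT : ∀ a b, 1 ≤ a → a < b → b ≤ k + 1 → j a < j b := fun a b ha hab hbk =>
    hjSM ⟨ha, le_trans hab.le hbk⟩ ⟨le_trans ha hab.le, hbk⟩ hab
  have hiLE : ∀ a b, a ≤ b → b ≤ k → i a ≤ i b := by
    intro a b hab hbk
    rcases eq_or_lt_of_le hab with rfl | h
    · exact le_rfl
    · exact (hiLT a b h hbk).le
  have hjLE : ∀ a b, 1 ≤ a → a ≤ b → b ≤ k + 1 → j a ≤ j b := by
    intro a b ha hab hbk
    rcases eq_or_lt_of_le hab with rfl | h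
    · exact le_rfl
    · exact (hjLT a b ha h hbk).le
  have hiRefl : ∀ a b, a ≤ k → b ≤ k → i a ≤ i b → a ≤ b := by
    intro a b hak hbk hle
    by_contra h
    exact absurd hle (not_le.mpr (hiLT b a (by omega) hak))
  have hjRefl : ∀ a b, 1 ≤ a → a ≤ k + 1 → 1 ≤ b → b ≤ k + 1 → j a ≤ j b → a ≤ b := by
    intro a b ha hak hb hbk hle
    by_contra h
    exact absurd hle (not_le.mpr (hjLT b a hb (by omega) hak))
  have hi1 : ∀ t, 1 ≤ t → t ≤ k → 1 ≤ i t := by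
    intro t h1 h2
    have := hiLT 0 t h1 h2
    omega
  have hj1 : ∀ t, 1 ≤ t → t ≤ k → 1 ≤ j t := fun t h1 h2 =>
    le_trans (hi1 t h1 h2) (hij t h1 h2)
  -- membership characterizations
  have hroots : ∀ x : ℕ × ℕ, x ∈ roots n ↔ 1 ≤ x.1 ∧ x.1 ≤ x.2 ∧ x.2 ≤ n := by
    intro x
    simp only [roots, Finset.mem_filter, Finset.mem_product, Finset.mem_Icc]
    omega
  have hGm : ∀ x : ℕ × ℕ, x ∈ Γ ↔ ∃ t, 1 ≤ t ∧ t ≤ k ∧ x = (i t, j t) := by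
    intro x
    simp only [hGdef, Finset.mem_image, Finset.mem_Icc]
    constructor
    · rintro ⟨t, ⟨h1, h2⟩, h3⟩; exact ⟨t, h1, h2, h3.symm⟩
    · rintro ⟨t, h1, h2, h3⟩; exact ⟨t, ⟨h1, h2⟩, h3.symm⟩
  have hIm : ∀ x : ℕ × ℕ, x ∈ upIdeal n Γ ↔
      (1 ≤ x.1 ∧ x.1 ≤ x.2 ∧ x.2 ≤ n ∧ ∃ t, 1 ≤ t ∧ t ≤ k ∧ x.1 ≤ i t ∧ j t ≤ x.2) := by
    intro x
    simp only [upIdeal, Finset.mem_filter, hroots, hrle]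
    constructor
    · rintro ⟨⟨a, b, c⟩, γ, hγ, h1, h2⟩
      rw [hGm] at hγ
      obtain ⟨t, t1, t2, rfl⟩ := hγ
      exact ⟨a, b, c, t, t1, t2, h1, h2⟩
    · rintro ⟨a, b, c, t, t1, t2, h1, h2⟩
      exact ⟨⟨a, b, c⟩, (i t, j t), (hGm _).mpr ⟨t, t1, t2, rfl⟩, h1, h2⟩
  have hGsubI : ∀ x ∈ Γ, x ∈ upIdeal n Γ := by
    intro x hx
    rw [hGm] at hx
    obtain ⟨t, t1, t2, rfl⟩ := hx
    rw [hIm]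
    exact ⟨hi1 t t1 t2, hij t t1 t2, hjn t t1 t2, t, t1, t2, le_rfl, le_rfl⟩
  have hminMono : ∀ (S T : Finset (ℕ × ℕ)) (x : ℕ × ℕ),
      T ⊆ S → x ∈ minOf S → x ∈ T → x ∈ minOf T := by
    intro S T x hsub hx hxT
    simp only [minOf, Finset.mem_filter] at hx ⊢
    exact ⟨hxT, fun y hy => hx.2 y (hsub hy)⟩
  -- Lemma A : minOf (upIdeal n Γ) = Γ
  have hminA : minOf (upIdeal n Γ) = Γ := by
    ext x
    simp only [minOf, Finset.mem_filter]
    constructor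
    · rintro ⟨hxI, hmin⟩
      rw [hIm] at hxI
      obtain ⟨a, b, c, t, t1, t2, h4, h5⟩ := hxI
      have hg : (i t, j t) ∈ upIdeal n Γ := hGsubI _ ((hGm _).mpr ⟨t, t1, t2, rfl⟩)
      have := hmin (i t, j t) hg ((hrle _ _).mpr ⟨h4, h5⟩)
      rw [hGm]
      exact ⟨t, t1, t2, this.symm⟩
    · intro hx
      refine ⟨hGsubI x hx, ?_⟩
      rw [hGm] at hx
      obtain ⟨t, t1, t2, rfl⟩ := hx
      intro y hy hyx
      rw [hrle] at hyx
      rw [hIm] at hy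
      obtain ⟨a, b, c, u, u1, u2, h4, h5⟩ := hy
      have htu : t ≤ u := hiRefl t u t2 u2 (le_trans hyx.1 h4)
      have hut : u ≤ t := hjRefl u t u1 (by omega) t1 (by omega) (le_trans h5 hyx.2)
      have huteq : u = t := le_antisymm hut htu
      subst huteq
      have e1 : y.1 = i u := le_antisymm h4 hyx.1
      have e2 : y.2 = j u := le_antisymm hyx.2 h5
      exact Prod.ext e1 e2
  -- Lemma B : description of minOf (upIdeal \ {γ_s})
  have hminB : ∀ s, 1 ≤ s → s ≤ k →
      minOf (upIdeal n Γ \ {(i s, j s)}) =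
        (Γ.erase (i s, j s)) ∪
        ((if i (s - 1) + 2 ≤ i s then ({(i s - 1, j s)} : Finset (ℕ × ℕ)) else ∅) ∪
         (if j s + 2 ≤ j (s + 1) then ({(i s, j s + 1)} : Finset (ℕ × ℕ)) else ∅)) := by
    intro s hs1 hs2
    have hii : i (s - 1) < i s := hiLT (s - 1) s (by omega) hs2
    have hjj : j s < j (s + 1) := hjLT s (s + 1) hs1 (by omega) (by omega)
    have his1 : 1 ≤ i s := hi1 s hs1 hs2
    have hjs1 : 1 ≤ j s := hj1 s hs1 hs2
    have hijs : i s ≤ j s := hij s hs1 hs2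
    have hjsn : j s ≤ n := hjn s hs1 hs2
    have hC1 : ∀ x : ℕ × ℕ,
        (x ∈ (if i (s - 1) + 2 ≤ i s then ({(i s - 1, j s)} : Finset (ℕ × ℕ)) else ∅)) ↔
        (i (s - 1) + 2 ≤ i s ∧ x = (i s - 1, j s)) := by
      intro x
      by_cases h : i (s - 1) + 2 ≤ i s <;> simp [h]
    have hC2 : ∀ x : ℕ × ℕ,
        (x ∈ (if j s + 2 ≤ j (s + 1) then ({(i s, j s + 1)} : Finset (ℕ × ℕ)) else ∅)) ↔
        (j s + 2 ≤ j (s + 1) ∧ x = (i s, j s + 1)) := by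
      intro x
      by_cases h : j s + 2 ≤ j (s + 1) <;> simp [h]
    ext x
    simp only [minOf, Finset.mem_filter, Finset.mem_sdiff, Finset.mem_singleton,
      Finset.mem_union, Finset.mem_erase, hC1, hC2]
    constructor
    · rintro ⟨⟨hxI, hxne⟩, hmin⟩
      have hxI' := hxI
      rw [hIm] at hxI'
      obtain ⟨ha, hb, hc, t, t1, t2, h4, h5⟩ := hxI'
      by_cases hts : t = s
      · subst hts
        by_cases hx1 : x.1 < i t
        · -- x = (i t - 1, j t) and first χ-condition holds
          right; left
          have his2 : 2 ≤ i t := by omega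
          have hcI : (i t - 1, j t) ∈ upIdeal n Γ := by
            rw [hIm]
            exact ⟨by omega, by omega, hjsn, t, t1, t2, by omega, le_rfl⟩
          have hcne : ((i t - 1, j t) : ℕ × ℕ) ≠ (i t, j t) := by
            simp only [ne_eq, Prod.mk.injEq, not_and]
            intro h; omega
          have hxc := hmin (i t - 1, j t) ⟨hcI, hcne⟩ ((hrle _ _).mpr ⟨by omega, h5⟩)
          have hcond : i (t - 1) + 2 ≤ i t := by
            by_contra hcnd
            have heq : i (t - 1) = i t - 1 := by omega
            rcases eq_or_lt_of_le t1 with hteq | ht2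
            · have : i (t - 1) = 0 := by rw [← hteq] at heq ⊢; simpa [hi0] using hi0
              omega
            · have ht1k : 1 ≤ t - 1 := by omega
              have hjlt : j (t - 1) < j t := hjLT (t - 1) t ht1k (by omega) (by omega)
              have hyI : (i t - 1, j t - 1) ∈ upIdeal n Γ := by
                rw [hIm]
                exact ⟨by omega, by omega, by omega, t - 1, ht1k, by omega, by omega, by omega⟩
              have hyne : ((i t - 1, j t - 1) : ℕ × ℕ) ≠ (i t, j t) := by
                simp only [ne_eq, Prod.mk.injEq, not_and]
                intro h; omega
              have hxy := hmin (i t - 1, j t - 1) ⟨hyI, hyne⟩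
                ((hrle _ _).mpr ⟨by omega, by omega⟩)
              rw [← hxc] at hxy
              have := congrArg Prod.snd hxy
              simp only at this
              omega
          exact ⟨hcond, hxc.symm⟩
        · by_cases hx2 : j t < x.2
          · -- x = (i t, j t + 1) and second χ-condition holds
            right; right
            have hc'I : (i t, j t + 1) ∈ upIdeal n Γ := by
              rw [hIm]
              exact ⟨his1, by omega, by omega, t, t1, t2, le_rfl, by omega⟩
            have hc'ne : ((i t, j t + 1) : ℕ × ℕ) ≠ (i t, j t) := by
              simp only [ne_eq, Prod.mk.injEq, not_and]
              intro h; omega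
            have hxc := hmin (i t, j t + 1) ⟨hc'I, hc'ne⟩
              ((hrle _ _).mpr ⟨h4, by omega⟩)
            have hcond : j t + 2 ≤ j (t + 1) := by
              by_contra hcnd
              have heq : j (t + 1) = j t + 1 := by omega
              rcases eq_or_lt_of_le t2 with hteq | htlt
              · -- t = k : j (k+1) = n + 1 = j t + 1, so j t = n, contradiction
                subst hteq
                omega
              · have ht1k : t + 1 ≤ k := by omega
                have hilt : i t < i (t + 1) := hiLT t (t + 1) (by omega) ht1k
                have hyI : (i t + 1, j t + 1) ∈ upIdeal n Γ := by
                  rw [hIm]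
                  exact ⟨by omega, by omega, by omega, t + 1, by omega, ht1k, by omega, by omega⟩
                have hyne : ((i t + 1, j t + 1) : ℕ × ℕ) ≠ (i t, j t) := by
                  simp only [ne_eq, Prod.mk.injEq, not_and]
                  intro h; omega
                have hxy := hmin (i t + 1, j t + 1) ⟨hyI, hyne⟩
                  ((hrle _ _).mpr ⟨by omega, by omega⟩)
                rw [← hxc] at hxy
                have := congrArg Prod.fst hxy
                simp only at this
                omega
            exact ⟨hcond, hxc.symm⟩
          · exact absurd (Prod.ext (by omega) (by omega)) hxne
      · -- t ≠ s : x = γ_t belongs to the erase part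
        left
        have hgne : ((i t, j t) : ℕ × ℕ) ≠ (i s, j s) := by
          simp only [ne_eq, Prod.mk.injEq, not_and]
          intro h
          rcases lt_or_gt_of_ne hts with hlt | hgt
          · exact absurd h (Nat.ne_of_lt (hiLT t s hlt hs2))
          · exact absurd h (Nat.ne_of_gt (hiLT s t hgt t2))
        have hgI : (i t, j t) ∈ upIdeal n Γ := hGsubI _ ((hGm _).mpr ⟨t, t1, t2, rfl⟩)
        have hxg := hmin (i t, j t) ⟨hgI, hgne⟩ ((hrle _ _).mpr ⟨h4, h5⟩)
        refine ⟨hxne, ?_⟩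
        rw [hGm]
        exact ⟨t, t1, t2, hxg.symm⟩
    · rintro (⟨hxne, hxG⟩ | ⟨hcond, rfl⟩ | ⟨hcond, rfl⟩)
      · -- old generators stay minimal
        have hxmin : x ∈ minOf (upIdeal n Γ) := by rw [hminA]; exact hxG
        have hxmem : x ∈ upIdeal n Γ \ {(i s, j s)} := by
          rw [Finset.mem_sdiff, Finset.mem_singleton]
          exact ⟨hGsubI x hxG, hxne⟩
        have := hminMono _ _ x Finset.sdiff_subset hxmin hxmem
        simp only [minOf, Finset.mem_filter, Finset.mem_sdiff, Finset.mem_singleton] at this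
        exact this
      · -- x = (i s - 1, j s)
        have his2 : 2 ≤ i s := by omega
        refine ⟨⟨?_, ?_⟩, ?_⟩
        · rw [hIm]
          exact ⟨by omega, by omega, hjsn, s, hs1, hs2, by omega, le_rfl⟩
        · simp only [ne_eq, Prod.mk.injEq, not_and]
          intro h; omega
        · rintro y ⟨hyI, hyne⟩ hyx
          rw [hrle] at hyx
          simp only at hyx
          rw [hIm] at hyI
          obtain ⟨ya, yb, yc, u, u1, u2, h4, h5⟩ := hyI
          have hus : u ≤ s := hjRefl u s u1 (by omega) hs1 (by omega) (by omega)
          have hueq : u = s := by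
            by_contra hune
            have hu1 : u ≤ s - 1 := by omega
            have : i u ≤ i (s - 1) := hiLE u (s - 1) hu1 (by omega)
            omega
          subst hueq
          have e2 : y.2 = j u := by omega
          have e1 : y.1 = i u - 1 := by
            have hy1ne : y.1 ≠ i u := by
              intro h
              exact hyne (Prod.ext h e2)
            omega
          exact Prod.ext e1 e2
      · -- x = (i s, j s + 1)
        have hjle : j (s + 1) ≤ n + 1 := by
          have := hjLE (s + 1) (k + 1) (by omega) (by omega) le_rfl
          omega
        have hjsn' : j s + 1 ≤ n := by omega
        refine ⟨⟨?_, ?_⟩, ?_⟩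
        · rw [hIm]
          exact ⟨his1, by omega, hjsn', s, hs1, hs2, le_rfl, by omega⟩
        · simp only [ne_eq, Prod.mk.injEq, not_and]
          intro h; omega
        · rintro y ⟨hyI, hyne⟩ hyx
          rw [hrle] at hyx
          simp only at hyx
          rw [hIm] at hyI
          obtain ⟨ya, yb, yc, u, u1, u2, h4, h5⟩ := hyI
          have hsu : s ≤ u := hiRefl s u hs2 u2 (by omega)
          have hueq : u = s := by
            by_contra hune
            have hu1 : s + 1 ≤ u := by omega
            have : j (s + 1) ≤ j u := hjLE (s + 1) u (by omega) hu1 (by omega)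
            omega
          subst hueq
          have e1 : y.1 = i u := by omega
          have e2 : y.2 = j u + 1 := by
            have hy2ne : y.2 ≠ j u := by
              intro h
              exact hyne (Prod.ext e1 h)
            omega
          exact Prod.ext e1 e2
  -- injectivity and cardinalities
  have hinjOn : ∀ a ∈ Finset.Icc 1 k, ∀ b ∈ Finset.Icc 1 k,
      (fun t => (i t, j t)) a = (fun t => (i t, j t)) b → a = b := by
    intro a ha b hb h
    rw [Finset.mem_Icc] at ha hb
    have h1 := congrArg Prod.fst h
    simp only at h1
    by_contra hne
    rcases lt_or_gt_of_ne hne with hlt | hgt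
    · exact absurd h1 (Nat.ne_of_lt (hiLT a b hlt hb.2))
    · exact absurd h1 (Nat.ne_of_gt (hiLT b a hgt ha.2))
  have hGcard : Γ.card = k := by
    rw [hGdef, Finset.card_image_of_injOn hinjOn, Nat.card_Icc]
    omega
  -- the per-generator formula
  have hrG : ∀ s, 1 ≤ s → s ≤ k →
      rGam n Γ (i s, j s) = chi (i s - i (s - 1)) + chi (j (s + 1) - j s) := by
    intro s hs1 hs2
    have hii : i (s - 1) < i s := hiLT (s - 1) s (by omega) hs2
    have hjj : j s < j (s + 1) := hjLT s (s + 1) hs1 (by omega) (by omega)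
    have hjs1 : 1 ≤ j s := hj1 s hs1 hs2
    have hgG : (i s, j s) ∈ Γ := (hGm _).mpr ⟨s, hs1, hs2, rfl⟩
    have hcnotG : ∀ h : i (s - 1) + 2 ≤ i s, ((i s - 1, j s) : ℕ × ℕ) ∉ Γ := by
      intro h hmem
      rw [hGm] at hmem
      obtain ⟨t, t1, t2, heq⟩ := hmem
      have h1 := congrArg Prod.fst heq
      have h2 := congrArg Prod.snd heq
      simp only at h1 h2
      have hts : t = s := by
        by_contra hne
        rcases lt_or_gt_of_ne hne with hlt | hgt
        · exact absurd h2.symm (Nat.ne_of_lt (hjLT t s t1 hlt (by omega)))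
        · exact absurd h2.symm (Nat.ne_of_gt (hjLT s t hs1 hgt (by omega)))
      rw [hts] at h1
      omega
    have hc'notG : ((i s, j s + 1) : ℕ × ℕ) ∉ Γ := by
      intro hmem
      rw [hGm] at hmem
      obtain ⟨t, t1, t2, heq⟩ := hmem
      have h1 := congrArg Prod.fst heq
      have h2 := congrArg Prod.snd heq
      simp only at h1 h2
      have hts : t = s := by
        by_contra hne
        rcases lt_or_gt_of_ne hne with hlt | hgt
        · exact absurd h1.symm (Nat.ne_of_lt (hiLT t s hlt hs2))
        · exact absurd h1.symm (Nat.ne_of_gt (hiLT s t hgt t2))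
      rw [hts] at h2
      omega
    have hcard1 : (minOf (upIdeal n Γ \ {(i s, j s)})).card =
        (k - 1) + ((if i (s - 1) + 2 ≤ i s then 1 else 0) +
          (if j s + 2 ≤ j (s + 1) then 1 else 0)) := by
      rw [hminB s hs1 hs2]
      have hd2 : Disjoint
          (if i (s - 1) + 2 ≤ i s then ({(i s - 1, j s)} : Finset (ℕ × ℕ)) else ∅)
          (if j s + 2 ≤ j (s + 1) then ({(i s, j s + 1)} : Finset (ℕ × ℕ)) else ∅) := by
        by_cases h1 : i (s - 1) + 2 ≤ i s <;> by_cases h2 : j s + 2 ≤ j (s + 1) <;>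
          simp [h1, h2, Prod.ext_iff] <;> omega
      have hd1 : Disjoint (Γ.erase (i s, j s))
          ((if i (s - 1) + 2 ≤ i s then ({(i s - 1, j s)} : Finset (ℕ × ℕ)) else ∅) ∪
           (if j s + 2 ≤ j (s + 1) then ({(i s, j s + 1)} : Finset (ℕ × ℕ)) else ∅)) := by
        rw [Finset.disjoint_left]
        intro x hx hx2
        have hxG : x ∈ Γ := Finset.mem_of_mem_erase hx
        rw [Finset.mem_union] at hx2
        rcases hx2 with hx2 | hx2
        · by_cases h1 : i (s - 1) + 2 ≤ i s
          · rw [if_pos h1, Finset.mem_singleton] at hx2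
            exact hcnotG h1 (hx2 ▸ hxG)
          · rw [if_neg h1] at hx2
            exact absurd hx2 (Finset.notMem_empty x)
        · by_cases h2 : j s + 2 ≤ j (s + 1)
          · rw [if_pos h2, Finset.mem_singleton] at hx2
            exact hc'notG (hx2 ▸ hxG)
          · rw [if_neg h2] at hx2
            exact absurd hx2 (Finset.notMem_empty x)
      rw [Finset.card_union_of_disjoint hd1, Finset.card_union_of_disjoint hd2,
        Finset.card_erase_of_mem hgG, hGcard]
      by_cases h1 : i (s - 1) + 2 ≤ i s <;> by_cases h2 : j s + 2 ≤ j (s + 1) <;>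
        simp [h1, h2]
    have e1 : (2 ≤ i s - i (s - 1)) ↔ (i (s - 1) + 2 ≤ i s) := by omega
    have e2 : (2 ≤ j (s + 1) - j s) ↔ (j s + 2 ≤ j (s + 1)) := by omega
    rw [rGam, hcard1, hminA, hGcard, chi, chi]
    by_cases h1 : i (s - 1) + 2 ≤ i s <;> by_cases h2 : j s + 2 ≤ j (s + 1) <;>
      simp only [e1, e2, if_pos, if_neg, h1, h2, if_true, if_false] <;> omega
  refine ⟨hrG, ?_⟩
  rw [OY, hGdef, Finset.sum_image hinjOn, ← Finset.sum_add_distrib]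
  refine Finset.sum_congr rfl ?_
  intro s hs
  rw [Finset.mem_Icc] at hs
  have := hrG s hs.1 hs.2
  rw [hGdef] at this
  exact this
end

section
/- For the poset Δ⁺ of positive roots of type A_n, the OY-number is invariant under the reverse operator: 𝒴(𝔛(Γ)) = 𝒴(Γ) for every antichain Γ of Δ⁺. -/
open Finset

/-!
For `γ ∈ Γ`, the minimal elements of `I(Γ) \ {γ}` are those of `Γ \ {γ}` together with the roots
covering `γ`, namely `(i - 1, j)` and `(i, j + 1)` for `γ = (i, j)`, that lie above no other
element of `Γ`. Hence `r_Γ(γ)` is the number of such free covers, and `𝒴(Γ)` counts the first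
coordinates of `Γ` not directly preceded by `0` or another first coordinate, plus the second
coordinates not directly followed by `n + 1` or another second coordinate.

List `Γ` as `(I 1, J 0), …, (I k, J (k - 1))` with both coordinates increasing, and put `I 0 = 0`,
`J k = n + 1`. Then `Δ⁺ \ I(Γ)` is the union of the boxes `I s < i ≤ j < J s`, so `𝔛(Γ)` consists
of their tops `(I s + 1, J s - 1)`, for those `s` whose box is nonempty. Both OY-numbers split
into contributions of the slots `m < k`, and in each slot the two contributions agree: a four-case
check on whether `I m + 1 < I (m + 1)` and whether `J m + 1 < J (m + 1)`.
-/

lemma mem_roots_iff {n : ℕ} {p : ℕ × ℕ} : p ∈ roots n ↔ 1 ≤ p.1 ∧ p.1 ≤ p.2 ∧ p.2 ≤ n := by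
  simp only [roots, mem_filter, mem_product, mem_Icc]
  omega

lemma rle_refl (p : ℕ × ℕ) : rle p p := ⟨le_rfl, le_rfl⟩

lemma rle_trans {p q r : ℕ × ℕ} (hpq : rle p q) (hqr : rle q r) : rle p r :=
  ⟨hqr.1.trans hpq.1, hpq.2.trans hqr.2⟩

lemma rle_antisymm {p q : ℕ × ℕ} (hpq : rle p q) (hqp : rle q p) : p = q :=
  Prod.ext (le_antisymm hqp.1 hpq.1) (le_antisymm hpq.2 hqp.2)

lemma mem_upIdeal_iff {n : ℕ} {Γ : Finset (ℕ × ℕ)} {x : ℕ × ℕ} :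
    x ∈ upIdeal n Γ ↔ x ∈ roots n ∧ ∃ γ ∈ Γ, rle γ x :=
  mem_filter

lemma isAC_Xrev (n : ℕ) (Γ : Finset (ℕ × ℕ)) : IsAC n (Xrev n Γ) := by
  refine ⟨fun x hx => (mem_sdiff.1 (mem_filter.1 hx).1).1, fun p hp q hq hpq => ?_⟩
  exact ((mem_filter.1 hp).2 q (mem_filter.1 hq).1 hpq).symm

def IsFreeCover (n : ℕ) (Γ : Finset (ℕ × ℕ)) (γ x : ℕ × ℕ) : Prop :=
  x ∈ roots n ∧ ∀ δ ∈ Γ, rle δ x → δ = γ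

instance (n : ℕ) (Γ : Finset (ℕ × ℕ)) (γ : ℕ × ℕ) : DecidablePred (IsFreeCover n Γ γ) :=
  fun x => inferInstanceAs (Decidable (x ∈ roots n ∧ ∀ δ ∈ Γ, rle δ x → δ = γ))

def LowerFree (Γ : Finset (ℕ × ℕ)) (γ : ℕ × ℕ) : Prop :=
  ∀ a ∈ insert 0 (Γ.image Prod.fst), a + 1 ≠ γ.1

def UpperFree (n : ℕ) (Γ : Finset (ℕ × ℕ)) (γ : ℕ × ℕ) : Prop :=
  ∀ b ∈ insert (n + 1) (Γ.image Prod.snd), γ.2 + 1 ≠ b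

instance (Γ : Finset (ℕ × ℕ)) : DecidablePred (LowerFree Γ) :=
  fun γ => inferInstanceAs (Decidable (∀ a ∈ insert 0 (Γ.image Prod.fst), a + 1 ≠ γ.1))

instance (n : ℕ) (Γ : Finset (ℕ × ℕ)) : DecidablePred (UpperFree n Γ) :=
  fun γ => inferInstanceAs (Decidable (∀ b ∈ insert (n + 1) (Γ.image Prod.snd), γ.2 + 1 ≠ b))

namespace IsAC

variable {n : ℕ} {Γ : Finset (ℕ × ℕ)} (hΓ : IsAC n Γ)
include hΓ

lemma fst_lt_iff_snd_lt {p q : ℕ × ℕ} (hp : p ∈ Γ) (hq : q ∈ Γ) : p.1 < q.1 ↔ p.2 < q.2 := by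
  constructor <;> intro h <;> by_contra! h'
  · exact h.ne (congrArg Prod.fst (hΓ.2 q hq p hp ⟨h.le, h'⟩)).symm
  · exact h.ne (congrArg Prod.snd (hΓ.2 p hp q hq ⟨h', h.le⟩))

lemma fst_injOn : Set.InjOn Prod.fst (Γ : Set (ℕ × ℕ)) := by
  intro p hp q hq h
  rcases le_total p.2 q.2 with h' | h'
  · exact hΓ.2 p hp q hq ⟨h.ge, h'⟩
  · exact (hΓ.2 q hq p hp ⟨h.le, h'⟩).symm

lemma snd_injOn : Set.InjOn Prod.snd (Γ : Set (ℕ × ℕ)) := by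
  intro p hp q hq h
  rcases le_total p.1 q.1 with h' | h'
  · exact (hΓ.2 q hq p hp ⟨h', h.ge⟩).symm
  · exact hΓ.2 p hp q hq ⟨h', h.le⟩

lemma minOf_upIdeal : minOf (upIdeal n Γ) = Γ := by
  ext x
  simp only [minOf, mem_filter, mem_upIdeal_iff]
  constructor
  · rintro ⟨⟨-, γ, hγ, hγx⟩, hmin⟩
    rwa [← hmin γ ⟨hΓ.1 hγ, γ, hγ, rle_refl γ⟩ hγx]
  · intro hx
    refine ⟨⟨hΓ.1 hx, x, hx, rle_refl x⟩, ?_⟩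
    rintro y ⟨-, γ, hγ, hγy⟩ hyx
    obtain rfl := hΓ.2 γ hγ x hx (rle_trans hγy hyx)
    exact rle_antisymm hyx hγy

lemma minOf_upIdeal_sdiff {γ : ℕ × ℕ} (hγ : γ ∈ Γ) :
    minOf (upIdeal n Γ \ {γ}) =
      Γ.erase γ ∪ ({(γ.1 - 1, γ.2), (γ.1, γ.2 + 1)} : Finset _).filter (IsFreeCover n Γ γ) := by
  have hγr := mem_roots_iff.1 (hΓ.1 hγ)
  ext x
  simp only [minOf, IsFreeCover, mem_filter, mem_sdiff, mem_singleton, mem_union, mem_erase,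
    mem_upIdeal_iff, mem_insert]
  constructor
  · rintro ⟨⟨⟨hx, δ, hδ, hδx⟩, hxγ⟩, hmin⟩
    by_cases hxΓ : x ∈ Γ
    · exact Or.inl ⟨hxγ, hxΓ⟩
    have honly : ∀ δ ∈ Γ, rle δ x → δ = γ := by
      intro δ hδ hδx
      by_contra hδγ
      exact hxΓ (hmin δ ⟨⟨hΓ.1 hδ, δ, hδ, rle_refl δ⟩, hδγ⟩ hδx ▸ hδ)
    obtain ⟨hx1, hx2⟩ : rle γ x := honly δ hδ hδx ▸ hδx
    have hxr := mem_roots_iff.1 hx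
    have hne : x.1 ≠ γ.1 ∨ x.2 ≠ γ.2 := by simpa only [ne_eq, Prod.ext_iff, not_and_or] using hxγ
    have hcover : ∀ c : ℕ × ℕ, c ∈ roots n → rle γ c → c ≠ γ → rle c x → c = x :=
      fun c hc hγc hcγ hcx => hmin c ⟨⟨hc, γ, hγ, hγc⟩, hcγ⟩ hcx
    refine Or.inr ⟨?_, hx, honly⟩
    by_cases h : x.1 < γ.1
    · refine Or.inl (hcover _ (mem_roots_iff.2 ⟨?_, ?_, ?_⟩) ⟨?_, ?_⟩ ?_ ⟨?_, ?_⟩).symm <;>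
        simp only [ne_eq, Prod.ext_iff, not_and_or] <;> omega
    · refine Or.inr (hcover _ (mem_roots_iff.2 ⟨?_, ?_, ?_⟩) ⟨?_, ?_⟩ ?_ ⟨?_, ?_⟩).symm <;>
        simp only [ne_eq, Prod.ext_iff, not_and_or] <;> omega
  · rintro (⟨hxγ, hxΓ⟩ | ⟨hc, hx, honly⟩)
    · refine ⟨⟨⟨hΓ.1 hxΓ, x, hxΓ, rle_refl x⟩, hxγ⟩, ?_⟩
      rintro y ⟨⟨-, ε, hε, hεy⟩, -⟩ hyx
      obtain rfl := hΓ.2 ε hε x hxΓ (rle_trans hεy hyx)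
      exact rle_antisymm hyx hεy
    · refine ⟨⟨⟨hx, γ, hγ, ?_⟩, ?_⟩, ?_⟩
      · rcases hc with rfl | rfl <;> exact ⟨by simp, by simp⟩
      · rcases hc with rfl | rfl <;> simp only [Prod.ext_iff, not_and_or] <;> omega
      · rintro y ⟨⟨-, ε, hε, hεy⟩, hyγ⟩ ⟨hyx1, hyx2⟩
        obtain rfl := honly ε hε (rle_trans hεy ⟨hyx1, hyx2⟩)
        obtain ⟨hεy1, hεy2⟩ := hεy
        rcases hc with rfl | rfl <;> dsimp only at hyx1 hyx2 <;>
          simp only [Prod.ext_iff, not_and_or] at hyγ ⊢ <;> omega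

lemma isFreeCover_left_iff {γ : ℕ × ℕ} (hγ : γ ∈ Γ) :
    IsFreeCover n Γ γ (γ.1 - 1, γ.2) ↔ LowerFree Γ γ := by
  have hγr := mem_roots_iff.1 (hΓ.1 hγ)
  simp only [IsFreeCover, LowerFree, mem_roots_iff, mem_insert, mem_image, forall_eq_or_imp,
    forall_exists_index, and_imp, rle]
  constructor
  · rintro ⟨hc, honly⟩
    refine ⟨by omega, ?_⟩
    rintro _ δ hδ rfl hδγ
    have hlt : δ.2 < γ.2 := (hΓ.fst_lt_iff_snd_lt hδ hγ).1 (by omega)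
    have := honly δ hδ (by omega) hlt.le
    subst this
    omega
  · rintro ⟨h1, hfree⟩
    refine ⟨by omega, fun δ hδ hδ1 hδ2 => hΓ.2 δ hδ γ hγ ⟨?_, hδ2⟩⟩
    by_contra h
    exact hfree _ δ hδ rfl (by omega)

lemma isFreeCover_right_iff {γ : ℕ × ℕ} (hγ : γ ∈ Γ) :
    IsFreeCover n Γ γ (γ.1, γ.2 + 1) ↔ UpperFree n Γ γ := by
  have hγr := mem_roots_iff.1 (hΓ.1 hγ)
  simp only [IsFreeCover, UpperFree, mem_roots_iff, mem_insert, mem_image, forall_eq_or_imp,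
    forall_exists_index, and_imp, rle]
  constructor
  · rintro ⟨hc, honly⟩
    refine ⟨by omega, ?_⟩
    rintro _ δ hδ rfl hδγ
    have hlt : γ.1 < δ.1 := (hΓ.fst_lt_iff_snd_lt hγ hδ).2 (by omega)
    have := honly δ hδ hlt.le (by omega)
    subst this
    omega
  · rintro ⟨h1, hfree⟩
    refine ⟨by omega, fun δ hδ hδ1 hδ2 => hΓ.2 δ hδ γ hγ ⟨hδ1, ?_⟩⟩
    by_contra h
    exact hfree _ δ hδ rfl (by omega)

lemma rGam_eq {γ : ℕ × ℕ} (hγ : γ ∈ Γ) :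
    rGam n Γ γ = (if LowerFree Γ γ then 1 else 0) + (if UpperFree n Γ γ then 1 else 0) := by
  have hcovers : ((γ.1 - 1, γ.2) : ℕ × ℕ) ≠ (γ.1, γ.2 + 1) := by simp [Prod.ext_iff]
  have hdisj : Disjoint (Γ.erase γ)
      (({(γ.1 - 1, γ.2), (γ.1, γ.2 + 1)} : Finset _).filter (IsFreeCover n Γ γ)) := by
    refine disjoint_left.2 fun x hx hc => ?_
    obtain ⟨hxγ, hxΓ⟩ := mem_erase.1 hx
    exact hxγ ((mem_filter.1 hc).2.2 x hxΓ (rle_refl x))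
  rw [rGam, hΓ.minOf_upIdeal, hΓ.minOf_upIdeal_sdiff hγ, card_union_of_disjoint hdisj,
    card_erase_of_mem hγ, card_filter, sum_pair hcovers, Nat.cast_add,
    Nat.cast_sub (card_pos.2 ⟨γ, hγ⟩)]
  simp only [hΓ.isFreeCover_left_iff hγ, hΓ.isFreeCover_right_iff hγ]
  push_cast
  ring

lemma OY_eq : OY n Γ = #(Γ.filter (LowerFree Γ)) + #(Γ.filter (UpperFree n Γ)) := by
  rw [OY, sum_congr rfl fun γ hγ => hΓ.rGam_eq hγ, sum_add_distrib, sum_boole, sum_boole]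

end IsAC

lemma StrictMonoOn.eq_add_one_of_add_one_eq {f : ℕ → ℕ} {K s t : ℕ}
    (hf : StrictMonoOn f (Set.Iic K)) (hs : s ≤ K) (ht : t ≤ K) (h : f t + 1 = f s) :
    s = t + 1 := by
  have hts : t < s := (hf.lt_iff_lt ht hs).1 (by omega)
  by_contra hne
  have h₁ : f t < f (t + 1) := hf (Set.mem_Iic.2 ht) (Set.mem_Iic.2 (by omega)) (lt_add_one t)
  have h₂ : f (t + 1) < f s := hf (Set.mem_Iic.2 (by omega)) (Set.mem_Iic.2 hs) (by omega)
  omega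

lemma StrictMonoOn.forall_add_one_ne_iff {f : ℕ → ℕ} {K m : ℕ}
    (hf : StrictMonoOn f (Set.Iic K)) (hm : m < K) :
    (∀ t ≤ K, f t + 1 ≠ f (m + 1)) ↔ f m + 1 < f (m + 1) := by
  have hlt : f m < f (m + 1) := hf (Set.mem_Iic.2 hm.le) (Set.mem_Iic.2 hm) (lt_add_one m)
  refine ⟨fun H => lt_of_le_of_ne hlt (H m hm.le), fun H t ht heq => ?_⟩
  obtain rfl : m = t := by simpa using hf.eq_add_one_of_add_one_eq hm ht heq
  omega

lemma StrictMonoOn.forall_add_one_ne_iff' {f : ℕ → ℕ} {K m : ℕ}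
    (hf : StrictMonoOn f (Set.Iic K)) (hm : m < K) :
    (∀ t ≤ K, f m + 1 ≠ f t) ↔ f m + 1 < f (m + 1) := by
  have hlt : f m < f (m + 1) := hf (Set.mem_Iic.2 hm.le) (Set.mem_Iic.2 hm) (lt_add_one m)
  refine ⟨fun H => lt_of_le_of_ne hlt (H (m + 1) hm), fun H t ht heq => ?_⟩
  obtain rfl := hf.eq_add_one_of_add_one_eq ht hm.le heq
  omega

lemma card_filter_image {α β : Type*} [DecidableEq β] {g : α → β} {s : Finset α}
    (hg : Set.InjOn g s) (p : β → Prop) [DecidablePred p] :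
    #((s.image g).filter p) = ∑ a ∈ s, if p (g a) then 1 else 0 := by
  rw [filter_image, card_image_of_injOn (hg.mono (filter_subset _ s)), card_filter]

lemma Nat.count_mem_eq_card_filter_lt (A : Finset ℕ) (m : ℕ) :
    Nat.count (· ∈ A) m = #{a ∈ A | a < m} := by
  rw [Nat.count_eq_card_filter_range]
  congr 1
  ext a
  simp [and_comm]

structure IsStaircase (n k : ℕ) (I J : ℕ → ℕ) (Γ : Finset (ℕ × ℕ)) : Prop where
  I_zero : I 0 = 0
  J_last : J k = n + 1
  strictMonoOn_I : StrictMonoOn I (Set.Iic k)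
  strictMonoOn_J : StrictMonoOn J (Set.Iic k)
  eq_image : Γ = (range k).image fun m => (I (m + 1), J m)

lemma IsAC.exists_isStaircase {n : ℕ} {Γ : Finset (ℕ × ℕ)} (hΓ : IsAC n Γ) :
    ∃ I J, IsStaircase n #Γ I J Γ := by
  have hbounds : ∀ γ ∈ Γ, 1 ≤ γ.1 ∧ γ.1 ≤ γ.2 ∧ γ.2 ≤ n := fun γ hγ => mem_roots_iff.1 (hΓ.1 hγ)
  set A := insert 0 (Γ.image Prod.fst)
  set B := insert (n + 1) (Γ.image Prod.snd)
  have hA : #A = #Γ + 1 := by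
    rw [card_insert_of_notMem, card_image_of_injOn hΓ.fst_injOn]
    simp only [mem_image, not_exists, not_and]
    exact fun γ hγ h => by have := hbounds γ hγ; omega
  have hB : #B = #Γ + 1 := by
    rw [card_insert_of_notMem, card_image_of_injOn hΓ.snd_injOn]
    simp only [mem_image, not_exists, not_and]
    exact fun γ hγ h => by have := hbounds γ hγ; omega
  have hmono : ∀ C : Finset ℕ, #C = #Γ + 1 → StrictMonoOn (Nat.nth (· ∈ C)) (Set.Iic #Γ) := by
    intro C hC
    have := Nat.nth_strictMonoOn C.finite_toSet
    rwa [finite_toSet_toFinset, hC, Set.Iio_add_one_eq_Iic] at this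
  -- an element of `Γ` has rank `#{δ ∈ Γ | δ.1 < γ.1}` both by first and by second coordinate
  have hrankA : ∀ γ ∈ Γ, Nat.count (· ∈ A) γ.1 = #{δ ∈ Γ | δ.1 < γ.1} + 1 := by
    intro γ hγ
    rw [Nat.count_mem_eq_card_filter_lt, filter_insert,
      if_pos (show 0 < γ.1 from (hbounds γ hγ).1), filter_image, card_insert_of_notMem,
      card_image_of_injOn (hΓ.fst_injOn.mono (filter_subset _ _))]
    simp only [mem_image, mem_filter, not_exists, not_and, and_imp]
    exact fun δ hδ _ h => by have := hbounds δ hδ; omega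
  have hrankB : ∀ γ ∈ Γ, Nat.count (· ∈ B) γ.2 = #{δ ∈ Γ | δ.1 < γ.1} := by
    intro γ hγ
    rw [Nat.count_mem_eq_card_filter_lt, filter_insert, if_neg (by have := hbounds γ hγ; omega),
      filter_image, card_image_of_injOn (hΓ.snd_injOn.mono (filter_subset _ _))]
    exact congrArg card (filter_congr fun δ hδ => (hΓ.fst_lt_iff_snd_lt hδ hγ).symm)
  have hrank_last : Nat.count (· ∈ B) (n + 1) = #Γ := by
    rw [Nat.count_mem_eq_card_filter_lt, filter_insert, if_neg (lt_irrefl _), filter_image,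
      card_image_of_injOn (hΓ.snd_injOn.mono (filter_subset _ _)),
      filter_true_of_mem fun γ hγ => Nat.lt_succ_of_le (hbounds γ hγ).2.2]
  refine ⟨Nat.nth (· ∈ A), Nat.nth (· ∈ B), Nat.nth_zero_of_zero (mem_insert_self _ _), ?_,
    hmono A hA, hmono B hB, ?_⟩
  · rw [← hrank_last, Nat.nth_count (mem_insert_self _ _)]
  refine eq_of_subset_of_card_le (fun γ hγ => ?_) (card_image_le.trans (card_range _).le)
  refine mem_image.2 ⟨#{δ ∈ Γ | δ.1 < γ.1}, mem_range.2 ?_, ?_⟩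
  · exact card_lt_card (filter_ssubset.2 ⟨γ, hγ, lt_irrefl _⟩)
  · rw [← hrankA γ hγ, ← hrankB γ hγ,
      Nat.nth_count (mem_insert_of_mem (mem_image_of_mem _ hγ)),
      Nat.nth_count (mem_insert_of_mem (mem_image_of_mem _ hγ))]

namespace IsStaircase

variable {n k : ℕ} {I J : ℕ → ℕ} {Γ : Finset (ℕ × ℕ)} (h : IsStaircase n k I J Γ)
include h

lemma insert_zero_image_fst : insert 0 (Γ.image Prod.fst) = (range (k + 1)).image I := by
  rw [h.eq_image, image_image, range_add_one', image_insert, map_eq_image, image_image, h.I_zero]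
  rfl

lemma insert_image_snd : insert (n + 1) (Γ.image Prod.snd) = (range (k + 1)).image J := by
  rw [h.eq_image, image_image, range_add_one, image_insert, h.J_last]
  rfl

lemma lowerFree_iff {m : ℕ} (hm : m < k) :
    LowerFree Γ (I (m + 1), J m) ↔ I m + 1 < I (m + 1) := by
  rw [LowerFree, h.insert_zero_image_fst, forall_mem_image,
    ← h.strictMonoOn_I.forall_add_one_ne_iff hm]
  simp only [mem_range, Nat.lt_succ_iff]

lemma upperFree_iff {m : ℕ} (hm : m < k) :
    UpperFree n Γ (I (m + 1), J m) ↔ J m + 1 < J (m + 1) := by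
  rw [UpperFree, h.insert_image_snd, forall_mem_image,
    ← h.strictMonoOn_J.forall_add_one_ne_iff' hm]
  simp only [mem_range, Nat.lt_succ_iff]

lemma OY_eq (hΓ : IsAC n Γ) : OY n Γ = ∑ m ∈ range k,
    ((if I m + 1 < I (m + 1) then 1 else 0) + (if J m + 1 < J (m + 1) then 1 else 0)) := by
  have hinj : Set.InjOn (fun m => (I (m + 1), J m)) (range k) := by
    intro a ha b hb hab
    rw [mem_coe, mem_range] at ha hb
    simpa using h.strictMonoOn_I.injOn (Set.mem_Iic.2 ha) (Set.mem_Iic.2 hb) (congrArg Prod.fst hab)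
  have hcount : ∀ (p : ℕ × ℕ → Prop) [DecidablePred p],
      (#(Γ.filter p) : ℤ) = ∑ m ∈ range k, if p (I (m + 1), J m) then 1 else 0 := by
    intro p _
    rw [h.eq_image, card_filter_image hinj]
    push_cast
    rfl
  rw [hΓ.OY_eq, hcount, hcount, ← sum_add_distrib]
  refine sum_congr rfl fun m hm => ?_
  simp only [h.lowerFree_iff (mem_range.1 hm), h.upperFree_iff (mem_range.1 hm)]

lemma J_le {s : ℕ} (hs : s ≤ k) : J s ≤ n + 1 :=
  h.J_last ▸ (h.strictMonoOn_J.le_iff_le (Set.mem_Iic.2 hs) (Set.mem_Iic.2 le_rfl)).2 hs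

lemma notMem_upIdeal_iff {x : ℕ × ℕ} (hx : x ∈ roots n) :
    x ∉ upIdeal n Γ ↔ ∃ s ≤ k, I s < x.1 ∧ x.2 < J s := by
  have hup : x ∈ upIdeal n Γ ↔ ∃ m < k, x.1 ≤ I (m + 1) ∧ J m ≤ x.2 := by
    simp [mem_upIdeal_iff, hx, h.eq_image, rle]
  rw [hup]
  push Not
  constructor
  · intro H
    have hle : Nat.findGreatest (fun t => I t < x.1) k ≤ k := Nat.findGreatest_le k
    refine ⟨_, hle, Nat.findGreatest_spec (P := fun t => I t < x.1) (Nat.zero_le k)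
      (by rw [h.I_zero]; exact (mem_roots_iff.1 hx).1), ?_⟩
    rcases hle.lt_or_eq with hlt | heq
    · exact H _ hlt (not_lt.1
        (Nat.findGreatest_is_greatest (P := fun t => I t < x.1) (lt_add_one _) hlt))
    · rw [heq, h.J_last]
      exact Nat.lt_succ_of_le (mem_roots_iff.1 hx).2.2
  · rintro ⟨s, hs, hIs, hJs⟩ m hm hxI
    have hsm : s ≤ m := by
      by_contra! hms
      have := (h.strictMonoOn_I.le_iff_le (Set.mem_Iic.2 (show m + 1 ≤ k from hm))
        (Set.mem_Iic.2 hs)).2 (show m + 1 ≤ s from hms)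
      omega
    exact hJs.trans_le ((h.strictMonoOn_J.le_iff_le (Set.mem_Iic.2 hs)
      (Set.mem_Iic.2 hm.le)).2 hsm)

lemma Xrev_eq : Xrev n Γ =
    ((range (k + 1)).filter fun s => I s + 1 < J s).image fun s => (I s + 1, J s - 1) := by
  have htop : ∀ s ≤ k, I s + 1 < J s → (I s + 1, J s - 1) ∈ roots n ∧
      (I s + 1, J s - 1) ∉ upIdeal n Γ := by
    intro s hs hgap
    have hr : (I s + 1, J s - 1) ∈ roots n := by
      have := h.J_le hs
      exact mem_roots_iff.2 ⟨by omega, by dsimp only; omega, by dsimp only; omega⟩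
    exact ⟨hr, (h.notMem_upIdeal_iff hr).2 ⟨s, hs, by simp, by simp; omega⟩⟩
  ext x
  simp only [Xrev, maxOf, mem_filter, mem_sdiff, mem_image, mem_range, Nat.lt_succ_iff]
  constructor
  · rintro ⟨⟨hx, hxup⟩, hmax⟩
    obtain ⟨s, hs, hIs, hJs⟩ := (h.notMem_upIdeal_iff hx).1 hxup
    have hxr := mem_roots_iff.1 hx
    have hgap : I s + 1 < J s := by omega
    exact ⟨s, ⟨hs, hgap⟩, hmax _ (htop s hs hgap) ⟨by dsimp only; omega, by dsimp only; omega⟩⟩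
  · rintro ⟨s, ⟨hs, hgap⟩, rfl⟩
    refine ⟨htop s hs hgap, ?_⟩
    rintro y ⟨hy, hyup⟩ ⟨hy1, hy2⟩
    obtain ⟨t, ht, hIt, hJt⟩ := (h.notMem_upIdeal_iff hy).1 hyup
    dsimp only at hy1 hy2
    have hts : t ≤ s := (h.strictMonoOn_I.le_iff_le (Set.mem_Iic.2 ht) (Set.mem_Iic.2 hs)).1
      (by omega)
    have hst : s ≤ t := (h.strictMonoOn_J.le_iff_le (Set.mem_Iic.2 hs) (Set.mem_Iic.2 ht)).1
      (by omega)
    obtain rfl := le_antisymm hts hst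
    exact Prod.ext (by omega) (by omega)

lemma not_lowerFree_Xrev_zero : ¬ LowerFree (Xrev n Γ) (I 0 + 1, J 0 - 1) :=
  fun H => H 0 (mem_insert_self _ _) (by rw [h.I_zero])

lemma lowerFree_Xrev_iff {m : ℕ} (hm : m < k) :
    LowerFree (Xrev n Γ) (I (m + 1) + 1, J (m + 1) - 1) ↔
      ¬ (I m + 1 < J m ∧ I m + 1 = I (m + 1)) := by
  have hpos : I 0 < I (m + 1) := h.strictMonoOn_I (Set.mem_Iic.2 (Nat.zero_le k))
    (Set.mem_Iic.2 (show m + 1 ≤ k from hm)) (Nat.succ_pos m)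
  simp only [LowerFree, h.Xrev_eq, image_image, forall_mem_insert, forall_mem_image, mem_filter,
    mem_range, Nat.lt_succ_iff, Function.comp_apply, and_imp]
  constructor
  · rintro ⟨-, H⟩ ⟨hgap, heq⟩
    exact H hm.le hgap (by omega)
  · intro H
    refine ⟨by rw [h.I_zero] at hpos; omega, fun s hs hgap heq => ?_⟩
    obtain rfl : m = s := by
      simpa using h.strictMonoOn_I.eq_add_one_of_add_one_eq (show m + 1 ≤ k from hm) hs
        (by omega)
    exact H ⟨hgap, by omega⟩

lemma not_upperFree_Xrev_last : ¬ UpperFree n (Xrev n Γ) (I k + 1, J k - 1) :=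
  fun H => H (n + 1) (mem_insert_self _ _) (by rw [h.J_last]; rfl)

lemma upperFree_Xrev_iff {m : ℕ} (hm : m < k) (hgap : I m + 1 < J m) :
    UpperFree n (Xrev n Γ) (I m + 1, J m - 1) ↔
      ¬ (I (m + 1) + 1 < J (m + 1) ∧ J m + 1 = J (m + 1)) := by
  have hlt : J m < n + 1 := h.J_last ▸ h.strictMonoOn_J (Set.mem_Iic.2 hm.le)
    (Set.mem_Iic.2 le_rfl) hm
  simp only [UpperFree, h.Xrev_eq, image_image, forall_mem_insert, forall_mem_image, mem_filter,
    mem_range, Nat.lt_succ_iff, Function.comp_apply, and_imp]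
  constructor
  · rintro ⟨-, H⟩ ⟨hgap', heq⟩
    exact H (show m + 1 ≤ k from hm) hgap' (by omega)
  · intro H
    refine ⟨by omega, fun s hs hgap' heq => H ?_⟩
    obtain rfl := h.strictMonoOn_J.eq_add_one_of_add_one_eq hs hm.le (by omega)
    exact ⟨hgap', by omega⟩

lemma OY_Xrev_eq : OY n (Xrev n Γ) = ∑ m ∈ range k,
    ((if I (m + 1) + 1 < J (m + 1) ∧ ¬ (I m + 1 < J m ∧ I m + 1 = I (m + 1)) then 1 else 0) +
      (if I m + 1 < J m ∧ ¬ (I (m + 1) + 1 < J (m + 1) ∧ J m + 1 = J (m + 1)) then 1 else 0)) := by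
  have hinj : Set.InjOn (fun s => (I s + 1, J s - 1))
      ((range (k + 1)).filter fun s => I s + 1 < J s) := by
    intro a ha b hb hab
    simp only [coe_filter, mem_range, Nat.lt_succ_iff, Set.mem_ofPred_eq] at ha hb
    exact h.strictMonoOn_I.injOn (Set.mem_Iic.2 ha.1) (Set.mem_Iic.2 hb.1)
      (by simpa using congrArg Prod.fst hab)
  have hcount : ∀ (p : ℕ × ℕ → Prop) [DecidablePred p], (#((Xrev n Γ).filter p) : ℤ) =
      ∑ s ∈ range (k + 1), if I s + 1 < J s ∧ p (I s + 1, J s - 1) then 1 else 0 := by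
    intro p _
    rw [h.Xrev_eq, card_filter_image hinj, sum_filter]
    push_cast
    exact sum_congr rfl fun s _ => by split_ifs <;> simp_all
  rw [(isAC_Xrev n Γ).OY_eq, hcount, hcount, sum_range_succ', sum_range_succ,
    if_neg fun H => h.not_lowerFree_Xrev_zero H.2, if_neg fun H => h.not_upperFree_Xrev_last H.2,
    add_zero, add_zero, ← sum_add_distrib]
  refine sum_congr rfl fun m hm => ?_
  have hm := mem_range.1 hm
  simp only [h.lowerFree_Xrev_iff hm]
  congr 1
  exact if_congr ⟨fun H => ⟨H.1, (h.upperFree_Xrev_iff hm H.1).1 H.2⟩,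
    fun H => ⟨H.1, (h.upperFree_Xrev_iff hm H.1).2 H.2⟩⟩ rfl rfl

end IsStaircase

theorem stmt5_general (n : ℕ) (Γ : Finset (ℕ × ℕ)) (hΓ : IsAC n Γ) :
    OY n (Xrev n Γ) = OY n Γ := by
  obtain ⟨I, J, h⟩ := hΓ.exists_isStaircase
  rw [h.OY_Xrev_eq, h.OY_eq hΓ]
  refine sum_congr rfl fun m hm => ?_
  have hm : m + 1 ≤ #Γ := mem_range.1 hm
  have hI : I m < I (m + 1) :=
    h.strictMonoOn_I (Set.mem_Iic.2 (by omega)) (Set.mem_Iic.2 hm) (lt_add_one m)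
  have hJ : J m < J (m + 1) :=
    h.strictMonoOn_J (Set.mem_Iic.2 (by omega)) (Set.mem_Iic.2 hm) (lt_add_one m)
  have hmem : (I (m + 1), J m) ∈ Γ := by
    rw [h.eq_image]
    exact mem_image_of_mem _ (mem_range.2 hm)
  have hIJ : I (m + 1) ≤ J m := (mem_roots_iff.1 (hΓ.1 hmem)).2.1
  split_ifs <;> omega

/-- For `Δ⁺(A_n)`, the OY-number is invariant under the reverse operator:
`𝒴(𝔛(Γ)) = 𝒴(Γ)` for every antichain `Γ`. -/
theorem stmt5 (n : ℕ) (hn : 1 ≤ n) (Γ : Finset (ℕ × ℕ)) (hΓ : IsAC n Γ) :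
    OY n (Xrev n Γ) = OY n Γ :=
  stmt5_general n Γ hΓ
end
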